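/- Let X be a reflexive Banach space and A : X → X* a pseudo-monotone operator that is locally bounded. Then A is demi-continuous, i.e., if x_n → x strongly in X then A x_n ⇀ A x weakly-* in X*. -/

import Mathlib

/-!
Along a strongly convergent sequence `uₙ → x`, local boundedness makes `‖A uₙ‖` eventually
bounded, so `⟨A uₙ, uₙ - x⟩ → 0`. Pseudo-monotonicity with `y = x - w` then gives
`⟨A x, w⟩ ≤ liminf ⟨A uₙ, w⟩` for every `w`; applied to `w` and `-w` this squeezes
`⟨A uₙ, w⟩` to `⟨A x, w⟩`.
-/

open Filter Topology

section
variable {X : Type*} [NormedAddCommGroup X] [NormedSpace ℝ X]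

/-- Weak convergence of a sequence in a normed space. -/
def WeakConv (u : ℕ → X) (x : X) : Prop :=
  ∀ f : X →L[ℝ] ℝ, Tendsto (fun n => f (u n)) atTop (𝓝 (f x))

/-- An operator `A : X → X*` is pseudo-monotone (Brezis). -/
def PseudoMonotone (A : X → X →L[ℝ] ℝ) : Prop :=
  ∀ (u : ℕ → X) (x : X), WeakConv u x →
    limsup (fun n => A (u n) (u n - x)) atTop ≤ 0 →
      ∀ y : X, A x (x - y) ≤ liminf (fun n => A (u n) (u n - y)) atTop

end

section
variable {X : Type*} [NormedAddCommGroup X] [NormedSpace ℝ X]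

theorem Filter.Tendsto.weakConv {u : ℕ → X} {x : X} (hu : Tendsto u atTop (𝓝 x)) :
    WeakConv u x :=
  fun f => (f.continuous.tendsto x).comp hu

section EventuallyBounded
variable {ι : Type*} {l : Filter ι} {T : ι → X →L[ℝ] ℝ} {M : ℝ}

theorem isBoundedUnder_abs_apply_of_eventually_norm_le (hT : ∀ᶠ i in l, ‖T i‖ ≤ M) (w : X) :
    IsBoundedUnder (· ≤ ·) l (fun i => |T i w|) :=
  isBoundedUnder_of_eventually_le (a := M * ‖w‖) <| hT.mono fun i hi =>
    ((T i).le_opNorm w).trans (mul_le_mul_of_nonneg_right hi (norm_nonneg w))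

theorem tendsto_apply_zero_of_eventually_norm_le (hT : ∀ᶠ i in l, ‖T i‖ ≤ M) {v : ι → X}
    (hv : Tendsto v l (𝓝 0)) : Tendsto (fun i => T i (v i)) l (𝓝 0) := by
  have hbound : Tendsto (fun i => M * ‖v i‖) l (𝓝 0) := by
    simpa using (tendsto_norm_zero.comp hv).const_mul M
  refine squeeze_zero_norm' (hT.mono fun i hi => ?_) hbound
  exact ((T i).le_opNorm (v i)).trans (mul_le_mul_of_nonneg_right hi (norm_nonneg _))

theorem tendsto_apply_of_le_liminf (hT : ∀ᶠ i in l, ‖T i‖ ≤ M) {L : X →L[ℝ] ℝ}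
    (h : ∀ w, L w ≤ liminf (fun i => T i w) l) (w : X) :
    Tendsto (fun i => T i w) l (𝓝 (L w)) := by
  have hbdd : ∀ w, IsBoundedUnder (· ≥ ·) l (fun i => T i w) := fun w =>
    (isBoundedUnder_le_abs.1 (isBoundedUnder_abs_apply_of_eventually_norm_le hT w)).2
  refine tendsto_order.2 ⟨fun a ha => eventually_lt_of_lt_liminf (ha.trans_le (h w)) (hbdd w),
    fun a ha => ?_⟩
  have hneg : -a < liminf (fun i => T i (-w)) l :=
    (neg_lt_neg ha).trans_le (by simpa only [map_neg] using h (-w))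
  exact (eventually_lt_of_lt_liminf hneg (hbdd (-w))).mono fun i hi => by
    simpa only [map_neg, neg_lt_neg_iff] using hi

end EventuallyBounded

theorem PseudoMonotone.le_liminf_apply {A : X → X →L[ℝ] ℝ} (hA : PseudoMonotone A)
    {u : ℕ → X} {x : X} {M : ℝ} (hu : WeakConv u x)
    (h0 : Tendsto (fun n => A (u n) (u n - x)) atTop (𝓝 0))
    (hM : ∀ᶠ n in atTop, ‖A (u n)‖ ≤ M) (w : X) :
    A x w ≤ liminf (fun n => A (u n) w) atTop := by
  have hw := isBoundedUnder_le_abs.1 (isBoundedUnder_abs_apply_of_eventually_norm_le hM w)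
  calc A x w = A x (x - (x - w)) := by rw [sub_sub_cancel]
    _ ≤ liminf (fun n => A (u n) (u n - (x - w))) atTop :=
      hA u x hu h0.limsup_eq.le (x - w)
    _ = liminf ((fun n => A (u n) (u n - x)) + fun n => A (u n) w) atTop := by
      congr 1; ext n; simp [sub_sub_eq_add_sub, sub_add_eq_add_sub]
    _ ≤ limsup (fun n => A (u n) (u n - x)) atTop + liminf (fun n => A (u n) w) atTop :=
      liminf_add_le h0.isBoundedUnder_ge h0.isBoundedUnder_le hw.2 hw.1.isCoboundedUnder_ge
    _ = liminf (fun n => A (u n) w) atTop := by rw [h0.limsup_eq, zero_add]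

end

theorem stmt_9_general {X : Type*} [NormedAddCommGroup X] [NormedSpace ℝ X]
    (A : X → X →L[ℝ] ℝ) (hA : PseudoMonotone A)
    (hloc : ∀ x : X, ∃ ε > (0 : ℝ), ∃ M : ℝ, ∀ y : X, ‖y - x‖ < ε → ‖A y‖ ≤ M) :
    ∀ (u : ℕ → X) (x : X), Tendsto u atTop (𝓝 x) →
      ∀ y : X, Tendsto (fun n => A (u n) y) atTop (𝓝 (A x y)) := by
  intro u x hu
  obtain ⟨ε, hε, M, hM⟩ := hloc x
  have hbdd : ∀ᶠ n in atTop, ‖A (u n)‖ ≤ M :=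
    (hu.eventually (Metric.ball_mem_nhds x hε)).mono fun n hn => hM _ (by rwa [← dist_eq_norm])
  have h0 := tendsto_apply_zero_of_eventually_norm_le hbdd (tendsto_sub_nhds_zero_iff.2 hu)
  exact tendsto_apply_of_le_liminf hbdd (hA.le_liminf_apply hu.weakConv h0 hbdd)

theorem stmt_9 {X : Type*} [NormedAddCommGroup X] [NormedSpace ℝ X]
    [CompleteSpace X]
    -- reflexivity, encoded via weak sequential compactness of bounded sequences
    (hrefl : ∀ v : ℕ → X, (∃ M : ℝ, ∀ n, ‖v n‖ ≤ M) →
      ∃ (φ : ℕ → ℕ) (z : X), StrictMono φ ∧ WeakConv (fun n => v (φ n)) z)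
    (A : X → X →L[ℝ] ℝ) (hA : PseudoMonotone A)
    (hloc : ∀ x : X, ∃ ε > (0 : ℝ), ∃ M : ℝ, ∀ y : X, ‖y - x‖ < ε → ‖A y‖ ≤ M) :
    ∀ (u : ℕ → X) (x : X), Tendsto u atTop (𝓝 x) →
      ∀ y : X, Tendsto (fun n => A (u n) y) atTop (𝓝 (A x y)) :=
  stmt_9_general A hA hloc
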